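/- Let S be a finite nonempty subset of ℝ^n with radius R = sup_{x ∈ S} ‖x‖_2, and let σ_1, …, σ_n be i.i.d. Rademacher random variables. Then E[ sup_{x ∈ S} (1/n) ∑_{i=1}^n σ_i x_i ] ≤ R √(2 log |S|) / n. -/

import Mathlib

/-!
Exponential-moment (Chernoff) bound for a maximum. For every `t > 0`, Jensen's inequality and
`exp (t max) ≤ ∑ exp` give `t 𝔼 max_x Z_x ≤ log |S| + max_x log 𝔼 exp (t Z_x)`, and for a
Rademacher sum `𝔼 exp (t ∑ σᵢ xᵢ) = ∏ cosh (t xᵢ) ≤ exp (t² ‖x‖² / 2)`. Minimising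
`log |S| / t + t R² / 2` over `t` gives `R √(2 log |S|)`.
-/

open Finset Real BigOperators

theorem Real.exp_expect_le_expect_exp {ι : Type*} {s : Finset ι} (hs : s.Nonempty)
    (f : ι → ℝ) :
    exp (𝔼 i ∈ s, f i) ≤ 𝔼 i ∈ s, exp (f i) := by
  have hw : ∑ _i ∈ s, (#s : ℝ)⁻¹ = 1 := by
    rw [sum_const, nsmul_eq_mul, mul_inv_cancel₀ (by simpa using hs.card_pos.ne')]
  simpa [expect_eq_sum_div_card, div_eq_inv_mul, mul_sum] using
    convexOn_exp.map_sum_le (fun _ _ => by positivity) hw (fun i _ => Set.mem_univ (f i))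

theorem expect_sup'_le_of_expect_exp_le {Ω α : Type*} [Fintype Ω] [Nonempty Ω]
    (S : Finset α) (hS : S.Nonempty) (Z : Ω → α → ℝ) {t c : ℝ} (ht : 0 < t)
    (hmgf : ∀ x ∈ S, 𝔼 ω, exp (t * Z ω x) ≤ exp c) :
    𝔼 ω, S.sup' hS (Z ω) ≤ (log #S + c) / t := by
  have hexp_sup : ∀ ω, exp (t * S.sup' hS (Z ω)) ≤ ∑ x ∈ S, exp (t * Z ω x) := by
    intro ω
    obtain ⟨x, hx, hmax⟩ := exists_mem_eq_sup' hS (Z ω)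
    rw [hmax]
    exact single_le_sum (f := fun x => exp (t * Z ω x)) (fun _ _ => (exp_pos _).le) hx
  rw [le_div_iff₀ ht, ← exp_le_exp]
  calc exp ((𝔼 ω, S.sup' hS (Z ω)) * t) = exp (𝔼 ω, t * S.sup' hS (Z ω)) := by
        rw [mul_comm, mul_expect]
    _ ≤ 𝔼 ω, exp (t * S.sup' hS (Z ω)) := exp_expect_le_expect_exp univ_nonempty _
    _ ≤ 𝔼 ω, ∑ x ∈ S, exp (t * Z ω x) := expect_le_expect fun ω _ => hexp_sup ω
    _ = ∑ x ∈ S, 𝔼 ω, exp (t * Z ω x) := expect_sum_comm _ _ _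
    _ ≤ ∑ _x ∈ S, exp c := sum_le_sum hmgf
    _ = exp (log #S + c) := by
        rw [sum_const, nsmul_eq_mul, exp_add, exp_log (by exact_mod_cast hS.card_pos)]

theorem sum_exp_signed_sum_eq_prod_cosh {ι : Type*} [Fintype ι] [DecidableEq ι]
    (c : ι → ℝ) :
    ∑ σ : ι → Bool, exp (∑ i, (if σ i then (1 : ℝ) else -1) * c i)
      = ∏ i, 2 * cosh (c i) := by
  simp_rw [exp_sum,
    ← Fintype.prod_sum (fun i (b : Bool) => exp ((if b then (1 : ℝ) else -1) * c i)),
    Fintype.sum_bool, cosh_eq]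
  simp [mul_div_cancel₀]

theorem expect_exp_mul_signed_sum_le {ι : Type*} [Fintype ι] [DecidableEq ι]
    (t : ℝ) (x : EuclideanSpace ℝ ι) :
    𝔼 σ : ι → Bool, exp (t * ∑ i, (if σ i then (1 : ℝ) else -1) * x i)
      ≤ exp (t ^ 2 * ‖x‖ ^ 2 / 2) := by
  have hsum := sum_exp_signed_sum_eq_prod_cosh (fun i => t * x i)
  simp only [mul_left_comm _ t, ← mul_sum] at hsum
  rw [Fintype.expect_eq_sum_div_card, hsum, prod_mul_distrib, prod_const, Fintype.card_fun,
    Fintype.card_bool, card_univ, Nat.cast_pow, Nat.cast_ofNat,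
    mul_div_cancel_left₀ _ (by positivity), EuclideanSpace.norm_sq_eq, mul_sum, sum_div, exp_sum]
  gcongr with i
  simpa [mul_pow] using cosh_le_exp_half_sq (t * x i)

theorem le_two_mul_sqrt_mul_of_forall_le {a A B : ℝ} (hA : 0 ≤ A) (hB : 0 ≤ B)
    (h : ∀ t > 0, a ≤ A / t + B * t) : a ≤ 2 * √(A * B) := by
  set u := √A
  set v := √B
  have hu : 0 ≤ u := sqrt_nonneg A
  have hv : 0 ≤ v := sqrt_nonneg B
  rw [sqrt_mul hA]
  refine le_of_forall_pos_le_add fun ε hε => ?_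
  -- `t = (u + δ) / (v + δ)` approximates the minimiser `u / v`, also when `u` or `v` vanishes.
  set δ := ε / (u + v + 1)
  have hδ : 0 < δ := by positivity
  have hδε : δ * (u + v) ≤ ε := by
    rw [div_mul_eq_mul_div, div_le_iff₀ (by positivity)]
    nlinarith
  have key : A / ((u + δ) / (v + δ)) + B * ((u + δ) / (v + δ))
      ≤ 2 * (u * v) + δ * (u + v) := by
    rw [← sq_sqrt hA, ← sq_sqrt hB, div_div_eq_mul_div]
    have h1 : u ^ 2 * (v + δ) / (u + δ) ≤ u * (v + δ) := by
      rw [div_le_iff₀ (by positivity)]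
      nlinarith [mul_nonneg (mul_nonneg hu hv) hδ.le, mul_nonneg hu hδ.le]
    have h2 : v ^ 2 * ((u + δ) / (v + δ)) ≤ v * (u + δ) := by
      rw [mul_div_assoc', div_le_iff₀ (by positivity)]
      nlinarith [mul_nonneg (mul_nonneg hu hv) hδ.le, mul_nonneg hv hδ.le]
    linarith
  linarith [h _ (by positivity : (0:ℝ) < (u + δ) / (v + δ))]

theorem expect_sup'_mul_signed_sum_le {ι α : Type*} [Fintype ι] [DecidableEq ι]
    (S : Finset α) (hS : S.Nonempty) (v : α → EuclideanSpace ℝ ι) {R : ℝ}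
    (hR : ∀ x ∈ S, ‖v x‖ ≤ R) (a : ℝ) {t : ℝ} (ht : 0 < t) :
    𝔼 σ : ι → Bool, S.sup' hS (fun x => a * ∑ i, (if σ i then (1 : ℝ) else -1) * v x i)
      ≤ log #S / t + (a * R) ^ 2 / 2 * t := by
  have hmgf : ∀ x ∈ S, 𝔼 σ : ι → Bool,
      exp (t * (a * ∑ i, (if σ i then (1 : ℝ) else -1) * v x i))
        ≤ exp ((t * a) ^ 2 * R ^ 2 / 2) :=
    fun x hx => calc
      _ = 𝔼 σ : ι → Bool, exp (t * a * ∑ i, (if σ i then (1 : ℝ) else -1) * v x i) := by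
          simp_rw [mul_assoc]
      _ ≤ exp ((t * a) ^ 2 * ‖v x‖ ^ 2 / 2) := expect_exp_mul_signed_sum_le _ _
      _ ≤ exp ((t * a) ^ 2 * R ^ 2 / 2) := by
          gcongr
          exact hR x hx
  calc _ ≤ (log #S + (t * a) ^ 2 * R ^ 2 / 2) / t :=
        expect_sup'_le_of_expect_exp_le S hS _ ht hmgf
    _ = log #S / t + (a * R) ^ 2 / 2 * t := by field_simp

/-- Massart's finite class lemma: for a finite nonempty set `S ⊆ ℝ^n` of radius
`R = max_{x ∈ S} ‖x‖₂`, the expected supremum over `S` of the Rademacher average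
`(1/n) ∑ᵢ σᵢ xᵢ` (expectation over the `2^n` uniform sign vectors) is at most
`R √(2 log |S|) / n`. -/
theorem massart_finite_class_lemma
    (n : ℕ) (S : Finset (EuclideanSpace ℝ (Fin n))) (hS : S.Nonempty) :
    ((2 : ℝ) ^ n)⁻¹ * ∑ σ : Fin n → Bool,
        S.sup' hS (fun x => (n : ℝ)⁻¹ * ∑ i, (if σ i then (1 : ℝ) else -1) * x i)
      ≤ (S.sup' hS fun x => ‖x‖) * Real.sqrt (2 * Real.log S.card) / n := by
  set R := S.sup' hS fun x => ‖x‖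
  set L := log #S
  have hR : 0 ≤ R := (norm_nonneg _).trans (le_sup' _ hS.choose_spec)
  calc _ = 𝔼 σ : Fin n → Bool,
        S.sup' hS (fun x => (n : ℝ)⁻¹ * ∑ i, (if σ i then (1 : ℝ) else -1) * x i) := by
        simp [Fintype.expect_eq_sum_div_card, div_eq_inv_mul]
    _ ≤ 2 * √(L * (((n : ℝ)⁻¹ * R) ^ 2 / 2)) :=
        le_two_mul_sqrt_mul_of_forall_le (log_natCast_nonneg _) (by positivity) fun t ht =>
          expect_sup'_mul_signed_sum_le S hS id (fun x hx => le_sup' (fun x => ‖x‖) hx) _ ht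
    _ = R * √(2 * L) / n := by
        rw [show L * (((n : ℝ)⁻¹ * R) ^ 2 / 2) = (R / n / 2) ^ 2 * (2 * L) by ring,
          sqrt_mul (sq_nonneg _), sqrt_sq (by positivity)]
        ring
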